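/- arXiv:1302.5688 — 3 statements merged into one kernel-verified Lean document; each statement's English description precedes it below -/
import Mathlib

section
/- Fix positive integers ℓ and N, and let φ₁, …, φ_N be i.i.d. Fibonacci random variables. For any tuple i = (i₁, …, i_{2ℓ}) ∈ {1,…,N}^{2ℓ}, the expectation E[∏_{λ=1}^{ℓ} (φ_{i_{2λ−1}} φ_{i_{2λ}} − δ_{i_{2λ−1}, i_{2λ}})] is a nonnegative integer, and it is at least 1 whenever the set partition Π(i) of {1,…,2ℓ} generated by i has no singleton blocks and contains none of the blocks {2λ−1, 2λ} for λ = 1, …, ℓ. -/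
/-!
A Fibonacci variable satisfies `φ ^ (m + 1) = F (m + 1) * φ + F m`, so its `m`-th moment is `1`
for `m = 0` and `F (m - 1)` otherwise: a natural number, positive unless `m = 1`.
A factor `φ_a φ_b - δ_ab` is the monomial `φ_a φ_b` if `a ≠ b`, and `φ_a ^ 2 - 1 = φ_a` if
`a = b`. Hence the integrand is a.s. the monomial `∏ k, φ_k ^ n_k`, where `n_k` is the size of
the block of `k` minus the number of pairs `{2λ-1, 2λ}` inside it, and by independence its
expectation is the product of the moments `E φ_k ^ n_k`. Finally `n_k = 1` means that the block
of `k` is a singleton or a forbidden doubleton.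
-/

open MeasureTheory ProbabilityTheory

/-- The position `2λ−1` (0-indexed: `2l`) in `{1,…,2ℓ}`. -/
def pos1 {ℓ : ℕ} (l : Fin ℓ) : Fin (2 * ℓ) := ⟨2 * l.1, by have := l.isLt; omega⟩

/-- The position `2λ` (0-indexed: `2l+1`) in `{1,…,2ℓ}`. -/
def pos2 {ℓ : ℕ} (l : Fin ℓ) : Fin (2 * ℓ) := ⟨2 * l.1 + 1, by have := l.isLt; omega⟩

open Finset

lemma pow_succ_eq_fib_mul_add_fib {R : Type*} [CommRing R] {x : R} (hx : x ^ 2 = x + 1)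
    (m : ℕ) : x ^ (m + 1) = Nat.fib (m + 1) * x + Nat.fib m := by
  induction m with
  | zero => simp
  | succ m ih =>
    rw [pow_succ, ih, Nat.fib_add_two]
    push_cast
    linear_combination (Nat.fib (m + 1) : R) * hx

def fibMoment : ℕ → ℕ
  | 0 => 1
  | m + 1 => Nat.fib m

lemma one_le_fibMoment {m : ℕ} (hm : m ≠ 1) : 1 ≤ fibMoment m := by
  match m with
  | 0 => exact le_rfl
  | m + 1 => exact Nat.fib_pos.mpr (by omega)

lemma abs_le_two_of_sq_eq_add_one {x : ℝ} (hx : x ^ 2 = x + 1) : |x| ≤ 2 := by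
  rw [abs_le]
  constructor <;> nlinarith

section FibonacciVariable

variable {Ω : Type*} [MeasurableSpace Ω] {μ : Measure Ω} {X : Ω → ℝ}

lemma integrable_of_sq_eq_add_one [IsFiniteMeasure μ] (hX : AEStronglyMeasurable X μ)
    (hsq : ∀ᵐ ω ∂μ, X ω ^ 2 = X ω + 1) : Integrable X μ :=
  Integrable.of_bound hX 2 (hsq.mono fun _ h => abs_le_two_of_sq_eq_add_one h)

lemma integral_pow_eq_fibMoment [IsProbabilityMeasure μ] (hX : AEStronglyMeasurable X μ)
    (hsq : ∀ᵐ ω ∂μ, X ω ^ 2 = X ω + 1) (hmean : ∫ ω, X ω ∂μ = 0) (m : ℕ) :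
    ∫ ω, X ω ^ m ∂μ = fibMoment m := by
  cases m with
  | zero => simp [fibMoment]
  | succ m =>
    rw [integral_congr_ae (hsq.mono fun _ h => pow_succ_eq_fib_mul_add_fib h m),
      integral_add ((integrable_of_sq_eq_add_one hX hsq).const_mul _) (integrable_const _),
      integral_const_mul, hmean]
    simp [fibMoment]

end FibonacciVariable

section PairMonomial

variable {ι κ : Type*} [DecidableEq ι]

/-- Exponent vector of the monomial to which `x a * x b - δ_{ab}` reduces under `x² = x + 1`. -/
def pairExponent (a b : ι) : ι → ℕ :=
  Pi.single a 1 + if a = b then 0 else Pi.single b 1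

variable [Fintype ι] {R : Type*} [CommRing R] {x : ι → R}

lemma prod_pow_single (a : ι) : ∏ k, x k ^ (Pi.single a 1 : ι → ℕ) k = x a := by
  simp [Pi.single_apply, pow_ite]

lemma mul_sub_ite_eq_prod_pow_pairExponent {a : ι} (ha : x a ^ 2 = x a + 1) (b : ι) :
    x a * x b - (if a = b then 1 else 0) = ∏ k, x k ^ pairExponent a b k := by
  by_cases h : a = b
  · subst h
    simp only [pairExponent, if_true, add_zero, prod_pow_single]
    linear_combination ha
  · simp only [pairExponent, if_neg h, Pi.add_apply, pow_add, prod_mul_distrib, prod_pow_single,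
      sub_zero]

lemma prod_mul_sub_ite_eq_prod_pow [Fintype κ] (hx : ∀ k, x k ^ 2 = x k + 1) (a b : κ → ι) :
    ∏ l, (x (a l) * x (b l) - if a l = b l then 1 else 0) =
      ∏ k, x k ^ ∑ l, pairExponent (a l) (b l) k := by
  simp only [mul_sub_ite_eq_prod_pow_pairExponent (hx _)]
  rw [prod_comm]
  exact prod_congr rfl fun k _ => prod_pow_eq_pow_sum _ _ _

end PairMonomial

lemma sum_univ_eq_sum_pos1_add_pos2 {M : Type*} [AddCommMonoid M] {ℓ : ℕ}
    (g : Fin (2 * ℓ) → M) : ∑ p, g p = ∑ l, (g (pos1 l) + g (pos2 l)) := by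
  let e : Fin ℓ × Fin 2 ≃ Fin (2 * ℓ) := finProdFinEquiv.trans (finCongr (mul_comm ℓ 2))
  have he0 : ∀ l, e (l, 0) = pos1 l := fun l => Fin.ext (by simp [e, pos1])
  have he1 : ∀ l, e (l, 1) = pos2 l := fun l => Fin.ext (by simp [e, pos2]; ring)
  rw [← e.sum_comp, Fintype.sum_prod_type]
  simp only [Fin.sum_univ_two, he0, he1]

lemma pos1_ne_pos2 {ℓ : ℕ} (l : Fin ℓ) : pos1 l ≠ pos2 l := by
  simp [pos1, pos2, Fin.ext_iff]

section Blocks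

variable {ι κ : Type*} [DecidableEq ι]

lemma pairExponent_add_ite (a b k : ι) :
    pairExponent a b k + (if a = k ∧ a = b then 1 else 0) =
      (if a = k then 1 else 0) + (if b = k then 1 else 0) := by
  by_cases hab : a = b
  · subst hab
    by_cases hak : a = k <;> simp [pairExponent, hak, eq_comm]
  · by_cases hak : a = k <;> by_cases hbk : b = k <;>
      simp [pairExponent, hab, hak, hbk, eq_comm]

lemma card_filter_diag_le_sum_pairExponent [Fintype κ] (a b : κ → ι) (k : ι) :
    #{l | a l = k ∧ a l = b l} ≤ ∑ l, pairExponent (a l) (b l) k := by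
  rw [card_filter]
  refine sum_le_sum fun l _ => ?_
  split_ifs with h
  · obtain ⟨rfl, hab⟩ := h
    simp [pairExponent, hab]
  · exact Nat.zero_le _

variable {ℓ : ℕ} (i : Fin (2 * ℓ) → ι)

lemma card_filter_eq_sum_pairExponent_add (k : ι) :
    #{p | i p = k} = ∑ l, pairExponent (i (pos1 l)) (i (pos2 l)) k +
      #{l | i (pos1 l) = k ∧ i (pos1 l) = i (pos2 l)} := by
  rw [card_filter, card_filter, sum_univ_eq_sum_pos1_add_pos2, ← sum_add_distrib]
  exact sum_congr rfl fun l _ => (pairExponent_add_ite _ _ k).symm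

lemma sum_pairExponent_ne_one
    (hsingle : ∀ p, #{q | i q = i p} ≠ 1)
    (hdoubleton : ∀ l, ({q | i q = i (pos1 l)} : Finset _) ≠ {pos1 l, pos2 l})
    (k : ι) : ∑ l, pairExponent (i (pos1 l)) (i (pos2 l)) k ≠ 1 := by
  intro hk
  have hcard := card_filter_eq_sum_pairExponent_add i k
  have hdiag := card_filter_diag_le_sum_pairExponent (fun l => i (pos1 l)) (fun l => i (pos2 l)) k
  rw [hk] at hcard hdiag
  rcases Nat.le_one_iff_eq_zero_or_eq_one.mp hdiag with hnodiag | hdiag1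
  · obtain ⟨p, hp⟩ := card_pos.mp (by omega : 0 < #{p | i p = k})
    have hp1 := hsingle p
    rw [(mem_filter.mp hp).2] at hp1
    exact hp1 (by omega)
  · obtain ⟨l, hl⟩ := card_pos.mp (one_pos.trans_eq hdiag1.symm)
    obtain ⟨hk1, hk2⟩ := (mem_filter.mp hl).2
    have hsub : {pos1 l, pos2 l} ⊆ ({p | i p = k} : Finset _) := by
      simp [insert_subset_iff, hk1, ← hk2]
    refine hdoubleton l ?_
    rw [hk1]
    exact (eq_of_subset_of_card_le hsub (by rw [card_pair (pos1_ne_pos2 l)]; omega)).symm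

end Blocks

/-- For i.i.d. Fibonacci random variables `φ₁,…,φ_N` and a tuple
`i ∈ {1,…,N}^{2ℓ}`, the expectation `E ∏_λ (φ_{i_{2λ−1}}φ_{i_{2λ}} − δ)` is a nonnegative
integer, and is at least `1` whenever the partition generated by `i` has no singleton
blocks and contains no forbidden doubleton `{2λ−1, 2λ}`. -/
theorem stmt_4 {Ω : Type*} [MeasureSpace Ω] [IsProbabilityMeasure (volume : Measure Ω)]
    (ℓ N : ℕ) (φ : Fin N → Ω → ℝ) (hmeas : ∀ k, Measurable (φ k))
    (hindep : iIndepFun φ volume)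
    (hsq : ∀ k, ∀ᵐ ω ∂volume, φ k ω ^ 2 = φ k ω + 1)
    (hmean : ∀ k, ∫ ω, φ k ω = 0)
    (i : Fin (2 * ℓ) → Fin N) :
    (∃ m : ℕ,
      (∫ ω, ∏ l : Fin ℓ, (φ (i (pos1 l)) ω * φ (i (pos2 l)) ω -
          if i (pos1 l) = i (pos2 l) then 1 else 0)) = m) ∧
    ((∀ p : Fin (2 * ℓ), (Finset.univ.filter fun q => i q = i p).card ≠ 1) →
     (∀ l : Fin ℓ,
        (Finset.univ.filter fun q => i q = i (pos1 l)) ≠ ({pos1 l, pos2 l} : Finset _)) →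
      1 ≤ ∫ ω, ∏ l : Fin ℓ, (φ (i (pos1 l)) ω * φ (i (pos2 l)) ω -
          if i (pos1 l) = i (pos2 l) then 1 else 0)) := by
  let n k := ∑ l, pairExponent (i (pos1 l)) (i (pos2 l)) k
  have hmonomial : (fun ω => ∏ l : Fin ℓ, (φ (i (pos1 l)) ω * φ (i (pos2 l)) ω -
      if i (pos1 l) = i (pos2 l) then 1 else 0)) =ᵐ[volume] fun ω => ∏ k, φ k ω ^ n k := by
    filter_upwards [ae_all_iff.2 hsq] with ω hω
    exact prod_mul_sub_ite_eq_prod_pow (x := fun k => φ k ω) hω _ _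
  have hintegral : (∫ ω, ∏ l : Fin ℓ, (φ (i (pos1 l)) ω * φ (i (pos2 l)) ω -
      if i (pos1 l) = i (pos2 l) then 1 else 0)) = ((∏ k, fibMoment (n k) : ℕ) : ℝ) := by
    rw [integral_congr_ae hmonomial, hindep.integral_fun_prod_comp
      (fun k => (hmeas k).aemeasurable) (fun k => (continuous_pow (n k)).aestronglyMeasurable)]
    push_cast
    exact prod_congr rfl fun k _ =>
      integral_pow_eq_fibMoment (hmeas k).aestronglyMeasurable (hsq k) (hmean k) (n k)
  refine ⟨⟨_, hintegral⟩, fun hsingle hdoubleton => ?_⟩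
  rw [hintegral]
  exact_mod_cast one_le_prod' fun k _ =>
    one_le_fibMoment (sum_pairExponent_ne_one i hsingle hdoubleton k)
end

section
/- Fix ℓ, N ∈ ℕ, a subset J ⊆ {1,…,N}, and functions f₁,…,f_ℓ : {1,…,N} → ℂ each with ∑_{i=1}^{N} f_λ(i) = 0. Put f(i₁,…,i_ℓ) = f₁(i₁)⋯f_ℓ(i_ℓ). Then |∑ f(i₁,…,i_ℓ)|, summed over all tuples of distinct indices i₁,…,i_ℓ ∈ {1,…,N} \ J, is bounded by ℓ^{2ℓ} times the sum of |f(i)| over all i ∈ {1,…,N}^ℓ with the property that every value appearing exactly once in i belongs to J. -/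
/-!
Expand the indicator of injectivity as `∑_σ sign σ · [i ∘ σ = i]`: for non-injective `i`, left
multiplication by a transposition in its stabiliser pairs the permutations fixing `i` with
opposite signs. For fixed `σ` the coordinates at the fixed points of `σ` are unconstrained, and
since each `f_λ` sums to zero, `∑_{j ∉ J} f_λ j = -∑_{j ∈ J} f_λ j`; so up to sign the `σ`-term is
the same sum with those coordinates taken in `J`. In such tuples a value taken only once comes
from a fixed point of `σ`, hence lies in `J`, so each of the `ℓ! ≤ ℓ^{2ℓ}` terms is bounded by
the right-hand side.
-/

open Finset Equiv

theorem Equiv.Perm.sum_sign_of_comp_eq_self {α β : Type*} [Fintype α] [DecidableEq α]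
    [DecidableEq β] (i : α → β) :
    ∑ σ : Perm α, (if i ∘ σ = i then (Perm.sign σ : ℤ) else 0) =
      if Function.Injective i then 1 else 0 := by
  split_ifs with hi
  · refine (Fintype.sum_eq_single 1 fun σ hσ => if_neg fun h => hσ ?_).trans (by simp)
    exact Perm.ext fun l => hi (congrFun h l)
  · obtain ⟨a, b, hab, hne⟩ := Function.not_injective_iff.mp hi
    have hswap : i ∘ swap a b = i := by
      rw [comp_swap_eq_update, hab, Function.update_eq_self, ← hab, Function.update_eq_self]
    have hneg := Fintype.sum_equiv (Equiv.mulLeft (swap a b))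
      (fun σ => -(if i ∘ σ = i then (Perm.sign σ : ℤ) else 0))
      (fun σ => if i ∘ σ = i then (Perm.sign σ : ℤ) else 0) fun σ => by
        simp [Perm.coe_mul, ← Function.comp_assoc, hswap, Perm.sign_swap hne, apply_ite]
    rw [sum_neg_distrib] at hneg
    omega

theorem Equiv.Perm.comp_eq_self_iff {α β : Type*} (σ : Perm α) (i : α → β) :
    i ∘ σ = i ↔ ∀ l l' : {l // σ l ≠ l}, σ l = l' → i l' = i l := by
  refine ⟨fun h l l' hl => by rw [← hl, ← Function.comp_apply (f := i), h], fun h => ?_⟩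
  funext l
  by_cases hl : σ l = l
  · rw [Function.comp_apply, hl]
  · exact h ⟨l, hl⟩ ⟨σ l, fun h' => hl (σ.injective h')⟩ rfl

theorem Equiv.Perm.mem_of_card_filter_eq_one {α β : Type*} [Fintype α] [DecidableEq β]
    {σ : Perm α} {i : α → β} {J : Finset β} (hσ : i ∘ σ = i) (hJ : ∀ l, σ l = l → i l ∈ J)
    {v : β} (hv : #{l | i l = v} = 1) : v ∈ J := by
  obtain ⟨l, hl⟩ := card_eq_one.mp hv
  have hlv : i l = v := by simpa using hl.ge (mem_singleton_self l)
  have hσl : σ l = l := by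
    simpa [hl] using (show σ l ∈ ({l | i l = v} : Finset α) by simp [← hlv, ← congrFun hσ l])
  exact hlv ▸ hJ l hσl

theorem Fintype.sum_ite_restrict_and_restrict_compl_eq_mul {α β R : Type*} [Fintype α]
    [DecidableEq α] [Fintype β] [CommSemiring R] (p : α → Prop) [DecidablePred p]
    (P : ({l // p l} → β) → Prop) (Q : ({l // ¬p l} → β) → Prop) [DecidablePred P]
    [DecidablePred Q] (f : α → β → R) :
    ∑ i : α → β, (if P (fun l => i l) ∧ Q (fun l => i l) then ∏ l, f l (i l) else 0) =
      (∑ g, if P g then ∏ l : {l // p l}, f l (g l) else 0) *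
        ∑ h, if Q h then ∏ l : {l // ¬p l}, f l (h l) else 0 := by
  rw [sum_mul_sum, ← Fintype.sum_prod_type',
    ← (piEquivPiSubtypeProd p fun _ => β).symm.sum_comp]
  refine Fintype.sum_congr _ _ fun gh => ?_
  have h₁ (l : {l // p l}) : (piEquivPiSubtypeProd p fun _ => β).symm gh l = gh.1 l := by
    simp [piEquivPiSubtypeProd_symm_apply, l.2]
  have h₂ (l : {l // ¬p l}) : (piEquivPiSubtypeProd p fun _ => β).symm gh l = gh.2 l := by
    simp [piEquivPiSubtypeProd_symm_apply, l.2]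
  simp only [ite_zero_mul_ite_zero, ← Fintype.prod_subtype_mul_prod_subtype p, h₁, h₂]

theorem Fintype.sum_ite_forall_mem {α β R : Type*} [Fintype α] [DecidableEq α] [Fintype β]
    [DecidableEq β] [CommSemiring R] (A : Finset β) (f : α → β → R) :
    ∑ g : α → β, (if ∀ l, g l ∈ A then ∏ l, f l (g l) else 0) = ∏ l, ∑ j ∈ A, f l j := by
  rw [prod_univ_sum, ← sum_filter]
  congr 1
  ext g
  simp

theorem Fintype.sum_ite_forall_notMem_eq_neg_one_pow_mul {α β R : Type*} [Fintype α]
    [DecidableEq α] [Fintype β] [DecidableEq β] [CommRing R] (p : α → Prop) [DecidablePred p]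
    (Q : ({l // ¬p l} → β) → Prop) [DecidablePred Q] (A : Finset β) (f : α → β → R)
    (hf : ∀ l, p l → ∑ j, f l j = 0) :
    ∑ i : α → β, (if (∀ l : {l // p l}, i l ∉ A) ∧ Q (fun l => i l) then ∏ l, f l (i l) else 0) =
      (-1) ^ Fintype.card {l // p l} *
        ∑ i : α → β,
          if (∀ l : {l // p l}, i l ∈ A) ∧ Q (fun l => i l) then ∏ l, f l (i l) else 0 := by
  have hcompl (l : {l // p l}) : ∑ j ∈ Aᶜ, f l j = -∑ j ∈ A, f l j :=
    eq_neg_of_add_eq_zero_left ((sum_compl_add_sum A _).trans (hf l l.2))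
  rw [sum_ite_restrict_and_restrict_compl_eq_mul p (fun g => ∀ l, g l ∉ A),
    sum_ite_restrict_and_restrict_compl_eq_mul p (fun g => ∀ l, g l ∈ A)]
  simp only [← mem_compl, sum_ite_forall_mem, hcompl, prod_neg, mul_assoc, card_univ]

theorem norm_sum_comp_eq_self_le {α β : Type*} [Fintype α] [DecidableEq α] [Fintype β]
    [DecidableEq β] (J : Finset β) (f : α → β → ℂ) (hf : ∀ l, ∑ j, f l j = 0) (σ : Perm α) :
    ‖∑ i : α → β, if i ∘ σ = i ∧ ∀ l, i l ∉ J then ∏ l, f l (i l) else 0‖ ≤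
      ∑ i : α → β, if ∀ v, #{l | i l = v} = 1 → v ∈ J then ‖∏ l, f l (i l)‖ else 0 := by
  set Q : ({l // ¬σ l = l} → β) → Prop :=
    fun h => (∀ l, h l ∉ J) ∧ ∀ l l' : {l // σ l ≠ l}, σ l = l' → h l' = h l
  have hQ (i : α → β) : (i ∘ σ = i ∧ ∀ l, i l ∉ J) ↔
      (∀ l : {l // σ l = l}, i l ∉ J) ∧ Q (fun l => i l) := by
    rw [σ.comp_eq_self_iff]
    exact ⟨fun ⟨hσ, hJ⟩ => ⟨fun l => hJ l, fun l => hJ l, hσ⟩,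
      fun ⟨hfix, hmov, hσ⟩ => ⟨hσ, fun l => if hl : σ l = l then hfix ⟨l, hl⟩ else hmov ⟨l, hl⟩⟩⟩
  calc _ = ‖∑ i : α → β, if (∀ l : {l // σ l = l}, i l ∉ J) ∧ Q (fun l => i l)
          then ∏ l, f l (i l) else 0‖ := by simp only [hQ]
    _ = ‖∑ i : α → β, if (∀ l : {l // σ l = l}, i l ∈ J) ∧ Q (fun l => i l)
          then ∏ l, f l (i l) else 0‖ := by
      rw [Fintype.sum_ite_forall_notMem_eq_neg_one_pow_mul _ _ _ _ fun l _ => hf l, norm_mul,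
        norm_pow, norm_neg, norm_one, one_pow, one_mul]
    _ ≤ _ := by
      refine (norm_sum_le _ _).trans (sum_le_sum fun i _ => ?_)
      split_ifs with hi hJ
      · exact le_rfl
      · refine absurd (fun v => σ.mem_of_card_filter_eq_one ?_ ?_) hJ
        · exact (σ.comp_eq_self_iff i).mpr hi.2.2
        · exact fun l hl => hi.1 ⟨l, hl⟩
      · exact norm_zero.trans_le (norm_nonneg _)
      · exact norm_zero.le

theorem norm_sum_ite_injective_le {α β : Type*} [Fintype α] [DecidableEq α] [Fintype β]
    [DecidableEq β] (J : Finset β) (f : α → β → ℂ) (hf : ∀ l, ∑ j, f l j = 0) :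
    ‖∑ i : α → β, if Function.Injective i ∧ ∀ l, i l ∉ J then ∏ l, f l (i l) else 0‖ ≤
      (Fintype.card α).factorial *
        ∑ i : α → β, if ∀ v, #{l | i l = v} = 1 → v ∈ J then ‖∏ l, f l (i l)‖ else 0 := by
  have hsign (i : α → β) :
      (if Function.Injective i ∧ ∀ l, i l ∉ J then ∏ l, f l (i l) else 0) =
        ∑ σ : Perm α, (Perm.sign σ : ℂ) *
          if i ∘ σ = i ∧ ∀ l, i l ∉ J then ∏ l, f l (i l) else 0 := by
    have h := congrArg (Int.cast : ℤ → ℂ) (Perm.sum_sign_of_comp_eq_self i)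
    push_cast at h
    rw [ite_and, ← boole_mul, ← h, sum_mul]
    exact sum_congr rfl fun σ _ => by rw [ite_zero_mul_ite_zero, mul_ite, mul_zero]
  simp only [hsign]
  rw [sum_comm, ← Fintype.card_perm, ← card_univ, ← nsmul_eq_mul, ← sum_const]
  refine (norm_sum_le _ _).trans (sum_le_sum fun σ _ => ?_)
  rw [← mul_sum, norm_mul, Complex.norm_intCast, abs_unit_intCast, one_mul]
  exact norm_sum_comp_eq_self_le J f hf σ

/-- For functions `f₁,…,f_ℓ : {1,…,N} → ℂ` each summing to zero and `J ⊆ {1,…,N}`, the sum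
of `f(i) = ∏ f_λ(i_λ)` over tuples of distinct indices avoiding `J` is bounded in absolute
value by `ℓ^{2ℓ}` times the sum of `|f(i)|` over tuples in which every value appearing
exactly once belongs to `J`. -/
theorem stmt_8 (ℓ N : ℕ) (J : Finset (Fin N)) (f : Fin ℓ → Fin N → ℂ)
    (hf : ∀ l, ∑ j, f l j = 0) :
    ‖∑ i : Fin ℓ → Fin N,
        if Function.Injective i ∧ ∀ l, i l ∉ J then ∏ l, f l (i l) else 0‖
      ≤ (ℓ : ℝ) ^ (2 * ℓ) *
        ∑ i : Fin ℓ → Fin N,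
          if ∀ v : Fin N, (Finset.univ.filter fun l => i l = v).card = 1 → v ∈ J
          then ‖∏ l, f l (i l)‖ else 0 := by
  have hfact : (ℓ.factorial : ℝ) ≤ (ℓ : ℝ) ^ (2 * ℓ) := by
    have hpow : 1 ≤ ℓ ^ ℓ := ℓ.factorial_pos.trans_le ℓ.factorial_le_pow
    calc (ℓ.factorial : ℝ) ≤ (ℓ : ℝ) ^ ℓ := mod_cast ℓ.factorial_le_pow
      _ ≤ ((ℓ : ℝ) ^ ℓ) ^ 2 := le_self_pow₀ (mod_cast hpow) two_ne_zero
      _ = (ℓ : ℝ) ^ (2 * ℓ) := by ring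
  calc _ ≤ ℓ.factorial * ∑ i : Fin ℓ → Fin N,
          if ∀ v, #{l | i l = v} = 1 → v ∈ J then ‖∏ l, f l (i l)‖ else 0 := by
        convert norm_sum_ite_injective_le J f hf
        rw [Fintype.card_fin]
    _ ≤ _ := by gcongr
end

section
/- Fix ℓ, N ∈ ℕ and matrices A₁,…,A_ℓ ∈ Mat_N(ℂ). For i = (i₁,…,i_{2ℓ}) ∈ {1,…,N}^{2ℓ} put A(i) = ∏_{λ=1}^{ℓ} A_λ(i_{2λ−1}, i_{2λ}). Then the sum of |A(i)| over all tuples i whose generated partition Π(i) lies in Part_{χχ}(2ℓ) is at most K_ℓ^ℓ ∏_{λ=1}^{ℓ} ‖A_λ‖₂, where ‖·‖₂ is the Hilbert–Schmidt norm and K_ℓ is a constant depending only on ℓ. -/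
/-- The Hilbert–Schmidt norm `‖A‖₂ = (tr AA*)^{1/2} = (∑_{i,j} |A(i,j)|²)^{1/2}`. -/
noncomputable def hsNorm {N : ℕ} (A : Matrix (Fin N) (Fin N) ℂ) : ℝ :=
  Real.sqrt (∑ i, ∑ j, ‖A i j‖ ^ 2)

section Aux

open Finset

variable {α β : Type*} [Fintype α] [DecidableEq α] {N : ℕ}

/-- The set of functions agreeing with `x₀` outside of `V`. -/
def fixSet (x₀ : α → Fin N) (V : Finset α) : Finset (α → Fin N) :=
  Finset.univ.filter fun x => ∀ a, a ∉ V → x a = x₀ a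

lemma mem_fixSet {x₀ : α → Fin N} {V : Finset α} {x : α → Fin N} :
    x ∈ fixSet x₀ V ↔ ∀ a, a ∉ V → x a = x₀ a := by
  simp [fixSet]

lemma fixSet_empty (x₀ : α → Fin N) : fixSet x₀ (∅ : Finset α) = {x₀} := by
  ext x
  simp only [mem_fixSet, Finset.mem_singleton, Finset.notMem_empty, not_false_iff,
    forall_true_left]
  constructor
  · intro h; funext a; exact h a
  · rintro rfl a; rfl

lemma sum_fixSet_erase (x₀ : α → Fin N) {V : Finset α} {v : α} (hv : v ∈ V)
    (F : (α → Fin N) → ℝ) :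
    ∑ x ∈ fixSet x₀ V, F x
      = ∑ x ∈ fixSet x₀ (V.erase v), ∑ t : Fin N, F (Function.update x v t) := by
  have hprod : ∑ x ∈ fixSet x₀ (V.erase v), ∑ t : Fin N, F (Function.update x v t)
      = ∑ p ∈ (fixSet x₀ (V.erase v)) ×ˢ (Finset.univ : Finset (Fin N)),
          F (Function.update p.1 v p.2) := by
    rw [Finset.sum_product]
  rw [hprod]
  refine Finset.sum_nbij' (fun x => (Function.update x v (x₀ v), x v))
    (fun p => Function.update p.1 v p.2) ?_ ?_ ?_ ?_ ?_
  · intro x hx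
    rw [mem_fixSet] at hx
    refine Finset.mem_product.mpr ⟨?_, Finset.mem_univ _⟩
    rw [mem_fixSet]
    intro a ha
    by_cases hav : a = v
    · subst hav; simp
    · show Function.update x v (x₀ v) a = x₀ a
      rw [Function.update_of_ne hav]
      exact hx a (fun haV => ha (Finset.mem_erase.mpr ⟨hav, haV⟩))
  · intro p hp
    obtain ⟨hp1, _⟩ := Finset.mem_product.mp hp
    rw [mem_fixSet] at hp1 ⊢
    intro a ha
    have hav : a ≠ v := fun h => ha (h ▸ hv)
    show Function.update p.1 v p.2 a = x₀ a
    rw [Function.update_of_ne hav]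
    exact hp1 a (fun haV => ha (Finset.mem_of_mem_erase haV))
  · intro x hx
    simp only []
    rw [Function.update_idem, Function.update_eq_self]
  · intro p hp
    obtain ⟨hp1, _⟩ := Finset.mem_product.mp hp
    rw [mem_fixSet] at hp1
    have hpv : p.1 v = x₀ v := hp1 v (Finset.notMem_erase v V)
    ext
    · simp only [Function.update_idem]
      rw [← hpv, Function.update_eq_self]
    · simp
  · intro x hx
    simp

lemma sum_prod_le_prod_sum (s : Finset β) (hs : s.Nonempty)
    (g : β → Fin N → ℝ) (hg : ∀ e ∈ s, ∀ t, 0 ≤ g e t) :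
    ∑ t : Fin N, ∏ e ∈ s, g e t ≤ ∏ e ∈ s, ∑ t : Fin N, g e t := by
  classical
  obtain ⟨a, ha⟩ := hs
  calc ∑ t : Fin N, ∏ e ∈ s, g e t
      ≤ ∑ t : Fin N, g a t * ∏ e ∈ s.erase a, ∑ u : Fin N, g e u := by
        refine Finset.sum_le_sum fun t _ => ?_
        rw [← Finset.mul_prod_erase s _ ha]
        refine mul_le_mul_of_nonneg_left ?_ (hg a ha t)
        exact Finset.prod_le_prod (fun e he => hg e (Finset.mem_of_mem_erase he) t)
          (fun e he => Finset.single_le_sum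
            (fun u _ => hg e (Finset.mem_of_mem_erase he) u) (Finset.mem_univ t))
    _ = (∑ t : Fin N, g a t) * ∏ e ∈ s.erase a, ∑ u : Fin N, g e u := by
        rw [← Finset.sum_mul]
    _ = ∏ e ∈ s, ∑ u : Fin N, g e u :=
        Finset.mul_prod_erase s (fun e => ∑ u : Fin N, g e u) ha

lemma sqrt_finset_prod (s : Finset β) (c : β → ℝ) (hc : ∀ e ∈ s, 0 ≤ c e) :
    Real.sqrt (∏ e ∈ s, c e) = ∏ e ∈ s, Real.sqrt (c e) := by
  classical
  induction s using Finset.cons_induction with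
  | empty => simp
  | cons a s ha ih =>
    rw [Finset.prod_cons, Finset.prod_cons, Real.sqrt_mul (hc a (Finset.mem_cons_self a s)),
      ih (fun e he => hc e (Finset.mem_cons.mpr (Or.inr he)))]

lemma holder_two [DecidableEq β] (s : Finset β) (h2 : 2 ≤ s.card)
    (g : β → Fin N → ℝ) (hg : ∀ e ∈ s, ∀ t, 0 ≤ g e t) :
    ∑ t : Fin N, ∏ e ∈ s, g e t ≤ ∏ e ∈ s, Real.sqrt (∑ t : Fin N, g e t ^ 2) := by
  have hne : s.Nonempty := Finset.card_pos.mp (by omega)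
  obtain ⟨a, ha⟩ := hne
  have hs' : (s.erase a).Nonempty := by
    rw [← Finset.card_pos, Finset.card_erase_of_mem ha]; omega
  have hL0 : 0 ≤ ∑ t : Fin N, ∏ e ∈ s, g e t :=
    Finset.sum_nonneg fun t _ => Finset.prod_nonneg fun e he => hg e he t
  have hrw : ∀ t : Fin N, ∏ e ∈ s, g e t = g a t * ∏ e ∈ s.erase a, g e t :=
    fun t => (Finset.mul_prod_erase s _ ha).symm
  have cs : (∑ t : Fin N, g a t * ∏ e ∈ s.erase a, g e t) ^ 2
      ≤ (∑ t : Fin N, g a t ^ 2) * (∑ t : Fin N, (∏ e ∈ s.erase a, g e t) ^ 2) :=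
    Finset.sum_mul_sq_le_sq_mul_sq _ _ _
  have hinner : ∑ t : Fin N, (∏ e ∈ s.erase a, g e t) ^ 2
      ≤ ∏ e ∈ s.erase a, ∑ t : Fin N, g e t ^ 2 := by
    have := sum_prod_le_prod_sum (s.erase a) hs' (fun e t => g e t ^ 2)
      (fun e _ t => sq_nonneg _)
    calc ∑ t : Fin N, (∏ e ∈ s.erase a, g e t) ^ 2
        = ∑ t : Fin N, ∏ e ∈ s.erase a, g e t ^ 2 := by
          refine Finset.sum_congr rfl fun t _ => ?_
          rw [Finset.prod_pow]
      _ ≤ _ := this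
  calc ∑ t : Fin N, ∏ e ∈ s, g e t
      = Real.sqrt ((∑ t : Fin N, ∏ e ∈ s, g e t) ^ 2) := (Real.sqrt_sq hL0).symm
    _ ≤ Real.sqrt ((∑ t : Fin N, g a t ^ 2) * ∏ e ∈ s.erase a, ∑ t : Fin N, g e t ^ 2) := by
        refine Real.sqrt_le_sqrt ?_
        calc (∑ t : Fin N, ∏ e ∈ s, g e t) ^ 2
            = (∑ t : Fin N, g a t * ∏ e ∈ s.erase a, g e t) ^ 2 := by
              congr 1; exact Finset.sum_congr rfl fun t _ => hrw t
          _ ≤ (∑ t : Fin N, g a t ^ 2) * (∑ t : Fin N, (∏ e ∈ s.erase a, g e t) ^ 2) := cs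
          _ ≤ _ := by
              refine mul_le_mul_of_nonneg_left hinner
                (Finset.sum_nonneg fun t _ => sq_nonneg _)
    _ = Real.sqrt (∑ t : Fin N, g a t ^ 2)
          * Real.sqrt (∏ e ∈ s.erase a, ∑ t : Fin N, g e t ^ 2) := by
        rw [Real.sqrt_mul (Finset.sum_nonneg fun t _ => sq_nonneg _)]
    _ = Real.sqrt (∑ t : Fin N, g a t ^ 2)
          * ∏ e ∈ s.erase a, Real.sqrt (∑ t : Fin N, g e t ^ 2) := by
        rw [sqrt_finset_prod _ _ (fun e _ => Finset.sum_nonneg fun t _ => sq_nonneg _)]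
    _ = ∏ e ∈ s, Real.sqrt (∑ t : Fin N, g e t ^ 2) :=
        Finset.mul_prod_erase s (fun e => Real.sqrt (∑ t : Fin N, g e t ^ 2)) ha

/-- Finner-type generalized Hölder inequality with all weights `1/2`. -/
lemma finner_ineq [DecidableEq β] (x₀ : α → Fin N) (V : Finset α) :
    ∀ (E : Finset β) (S : β → Finset α) (f : β → (α → Fin N) → ℝ),
    (∀ e ∈ E, ∀ x, 0 ≤ f e x) →
    (∀ e ∈ E, ∀ x y, (∀ a ∈ S e, x a = y a) → f e x = f e y) →
    (∀ e ∈ E, S e ⊆ V) →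
    (∀ v ∈ V, 2 ≤ (E.filter fun e => v ∈ S e).card) →
    ∑ x ∈ fixSet x₀ V, ∏ e ∈ E, f e x
      ≤ ∏ e ∈ E, Real.sqrt (∑ x ∈ fixSet x₀ (S e), f e x ^ 2) := by
  induction V using Finset.strongInduction with
  | _ V IH =>
    intro E S f hf0 hdep hSV hdeg
    rcases V.eq_empty_or_nonempty with rfl | ⟨v, hv⟩
    · rw [fixSet_empty, Finset.sum_singleton]
      refine Finset.prod_le_prod (fun e he => hf0 e he x₀) (fun e he => ?_)
      have hSe : S e = ∅ := Finset.subset_empty.mp (hSV e he)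
      rw [hSe, fixSet_empty, Finset.sum_singleton, Real.sqrt_sq (hf0 e he x₀)]
    · set Ev := E.filter (fun e => v ∈ S e) with hEvdef
      have hEv2 : 2 ≤ Ev.card := hdeg v hv
      set f' : β → (α → Fin N) → ℝ :=
        fun e x => if v ∈ S e then
          Real.sqrt (∑ t : Fin N, f e (Function.update x v t) ^ 2) else f e x with hf'def
      set S' : β → Finset α := fun e => (S e).erase v with hS'def
      have key1 : ∑ x ∈ fixSet x₀ V, ∏ e ∈ E, f e x
          ≤ ∑ x ∈ fixSet x₀ (V.erase v), ∏ e ∈ E, f' e x := by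
        rw [sum_fixSet_erase x₀ hv]
        refine Finset.sum_le_sum fun x hx => ?_
        have split : ∀ t : Fin N, ∏ e ∈ E, f e (Function.update x v t)
            = (∏ e ∈ Ev, f e (Function.update x v t))
              * ∏ e ∈ E.filter (fun e => v ∉ S e), f e x := by
          intro t
          rw [← Finset.prod_filter_mul_prod_filter_not E (fun e => v ∈ S e)]
          congr 1
          refine Finset.prod_congr rfl fun e he => ?_
          obtain ⟨heE, hev⟩ := Finset.mem_filter.mp he
          refine hdep e heE _ _ (fun a haS => ?_)
          have hav : a ≠ v := fun h => hev (by rwa [h] at haS)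
          exact Function.update_of_ne hav _ _
        calc ∑ t : Fin N, ∏ e ∈ E, f e (Function.update x v t)
            = (∑ t : Fin N, ∏ e ∈ Ev, f e (Function.update x v t))
                * ∏ e ∈ E.filter (fun e => v ∉ S e), f e x := by
              rw [Finset.sum_mul]
              exact Finset.sum_congr rfl fun t _ => split t
          _ ≤ (∏ e ∈ Ev, Real.sqrt (∑ t : Fin N, f e (Function.update x v t) ^ 2))
                * ∏ e ∈ E.filter (fun e => v ∉ S e), f e x := by
              refine mul_le_mul_of_nonneg_right ?_
                (Finset.prod_nonneg fun e he => hf0 e (Finset.mem_filter.mp he).1 x)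
              exact holder_two Ev hEv2 _
                (fun e he t => hf0 e (Finset.mem_filter.mp he).1 _)
          _ = ∏ e ∈ E, f' e x := by
              rw [← Finset.prod_filter_mul_prod_filter_not E (fun e => v ∈ S e)]
              congr 1
              · refine Finset.prod_congr rfl fun e he => ?_
                simp only [hf'def, if_pos (Finset.mem_filter.mp he).2]
              · refine Finset.prod_congr rfl fun e he => ?_
                simp only [hf'def, if_neg (Finset.mem_filter.mp he).2]
      have hsub : V.erase v ⊂ V := Finset.erase_ssubset hv
      have hf0' : ∀ e ∈ E, ∀ x, 0 ≤ f' e x := by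
        intro e he x
        by_cases hve : v ∈ S e
        · simp only [hf'def, if_pos hve]; exact Real.sqrt_nonneg _
        · simp only [hf'def, if_neg hve]; exact hf0 e he x
      have hdep' : ∀ e ∈ E, ∀ x y, (∀ a ∈ S' e, x a = y a) → f' e x = f' e y := by
        intro e he x y hxy
        by_cases hve : v ∈ S e
        · simp only [hf'def, if_pos hve]
          congr 1
          refine Finset.sum_congr rfl fun t _ => ?_
          congr 1
          refine hdep e he _ _ fun a haS => ?_
          by_cases hav : a = v
          · subst hav; simp
          · rw [Function.update_of_ne hav, Function.update_of_ne hav]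
            exact hxy a (Finset.mem_erase.mpr ⟨hav, haS⟩)
        · simp only [hf'def, if_neg hve]
          refine hdep e he _ _ fun a haS => ?_
          have hav : a ≠ v := fun h => hve (h ▸ haS)
          exact hxy a (Finset.mem_erase.mpr ⟨hav, haS⟩)
      have hSV' : ∀ e ∈ E, S' e ⊆ V.erase v := by
        intro e he
        exact Finset.erase_subset_erase v (hSV e he)
      have hdeg' : ∀ u ∈ V.erase v, 2 ≤ (E.filter fun e => u ∈ S' e).card := by
        intro u hu
        obtain ⟨hune, huV⟩ := Finset.mem_erase.mp hu
        have hfe : (E.filter fun e => u ∈ S' e) = E.filter fun e => u ∈ S e := by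
          refine Finset.filter_congr fun e _ => ?_
          simp only [hS'def, Finset.mem_erase]
          exact and_iff_right hune
        rw [hfe]
        exact hdeg u huV
      have key2 := IH (V.erase v) hsub E S' f' hf0' hdep' hSV' hdeg'
      have key3 : ∏ e ∈ E, Real.sqrt (∑ x ∈ fixSet x₀ (S' e), f' e x ^ 2)
          = ∏ e ∈ E, Real.sqrt (∑ x ∈ fixSet x₀ (S e), f e x ^ 2) := by
        refine Finset.prod_congr rfl fun e he => ?_
        by_cases hve : v ∈ S e
        · have heq : ∑ x ∈ fixSet x₀ (S' e), f' e x ^ 2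
              = ∑ x ∈ fixSet x₀ (S e), f e x ^ 2 := by
            rw [sum_fixSet_erase x₀ hve (fun y => f e y ^ 2)]
            refine Finset.sum_congr rfl fun x hx => ?_
            simp only [hf'def, if_pos hve]
            rw [Real.sq_sqrt (Finset.sum_nonneg fun t _ => sq_nonneg _)]
          rw [heq]
        · have h1 : S' e = S e := by
            simp only [hS'def]; exact Finset.erase_eq_of_notMem hve
          have h2 : ∀ x, f' e x = f e x := fun x => by
            simp only [hf'def, if_neg hve]
          rw [h1]
          congr 1
          exact Finset.sum_congr rfl fun x _ => by rw [h2]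
      calc ∑ x ∈ fixSet x₀ V, ∏ e ∈ E, f e x
          ≤ ∑ x ∈ fixSet x₀ (V.erase v), ∏ e ∈ E, f' e x := key1
        _ ≤ ∏ e ∈ E, Real.sqrt (∑ x ∈ fixSet x₀ (S' e), f' e x ^ 2) := key2
        _ = _ := key3

end Aux

/-- Representative of the `Π(i)`-class of `p`: the minimum of the class. -/
def rep {ℓ N : ℕ} (i : Fin (2 * ℓ) → Fin N) (p : Fin (2 * ℓ)) : Fin (2 * ℓ) :=
  (Finset.univ.filter fun q => i q = i p).min'
    ⟨p, Finset.mem_filter.mpr ⟨Finset.mem_univ p, rfl⟩⟩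

lemma rep_spec {ℓ N : ℕ} (i : Fin (2 * ℓ) → Fin N) (p : Fin (2 * ℓ)) :
    i (rep i p) = i p := by
  have := Finset.min'_mem (Finset.univ.filter fun q => i q = i p)
    ⟨p, Finset.mem_filter.mpr ⟨Finset.mem_univ p, rfl⟩⟩
  exact (Finset.mem_filter.mp this).2

lemma rep_congr {ℓ N : ℕ} {i : Fin (2 * ℓ) → Fin N} {p q : Fin (2 * ℓ)}
    (h : i p = i q) : rep i p = rep i q := by
  have hset : (Finset.univ.filter fun r => i r = i p)
      = (Finset.univ.filter fun r => i r = i q) := by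
    ext r; simp [h]
  unfold rep
  congr 1

/-- The edge index of a position. -/
def lamIdx {ℓ : ℕ} (q : Fin (2 * ℓ)) : Fin ℓ := ⟨q.1 / 2, by have := q.isLt; omega⟩

lemma lam_pos {ℓ : ℕ} (q : Fin (2 * ℓ)) :
    q = pos1 (lamIdx q) ∨ q = pos2 (lamIdx q) := by
  rcases Nat.mod_two_eq_zero_or_one q.1 with h | h
  · left; apply Fin.ext; simp only [pos1, lamIdx]; omega
  · right; apply Fin.ext; simp only [pos2, lamIdx]; omega

set_option maxHeartbeats 1600000 in
/-- For each `ℓ` there is a constant `K_ℓ` such that for all `N` and all matrices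
`A₁,…,A_ℓ ∈ Mat_N(ℂ)`, the sum of `|A(i)| = ∏_λ |A_λ(i_{2λ−1}, i_{2λ})|` over all tuples
`i ∈ {1,…,N}^{2ℓ}` whose generated partition has no singleton block and no forbidden
doubleton block `{2λ−1, 2λ}` is at most `K_ℓ^ℓ ∏_λ ‖A_λ‖₂`. -/
theorem stmt_10 (ℓ : ℕ) :
    ∃ K : ℝ, ∀ (N : ℕ) (A : Fin ℓ → Matrix (Fin N) (Fin N) ℂ),
      (∑ i : Fin (2 * ℓ) → Fin N,
        if (∀ p : Fin (2 * ℓ), (Finset.univ.filter fun q => i q = i p).card ≠ 1) ∧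
           (∀ l : Fin ℓ,
             (Finset.univ.filter fun q => i q = i (pos1 l)) ≠ ({pos1 l, pos2 l} : Finset _))
        then ‖∏ l : Fin ℓ, A l (i (pos1 l)) (i (pos2 l))‖ else 0)
      ≤ K ^ ℓ * ∏ l : Fin ℓ, hsNorm (A l) := by
  classical
  refine ⟨((2 * ℓ : ℕ) : ℝ) ^ 2, ?_⟩
  intro N A
  have hhs0 : (0 : ℝ) ≤ ∏ l : Fin ℓ, hsNorm (A l) :=
    Finset.prod_nonneg fun l _ => Real.sqrt_nonneg _
  have hRHS0 : (0 : ℝ) ≤ (((2 * ℓ : ℕ) : ℝ) ^ 2) ^ ℓ * ∏ l : Fin ℓ, hsNorm (A l) :=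
    mul_nonneg (pow_nonneg (sq_nonneg _) _) hhs0
  -- the condition as a predicate
  set P : (Fin (2 * ℓ) → Fin N) → Prop := fun i =>
    (∀ p : Fin (2 * ℓ), (Finset.univ.filter fun q => i q = i p).card ≠ 1) ∧
    (∀ l : Fin ℓ,
      (Finset.univ.filter fun q => i q = i (pos1 l)) ≠ ({pos1 l, pos2 l} : Finset _))
    with hPdef
  set F : (Fin (2 * ℓ) → Fin N) → ℝ :=
    fun i => ‖∏ l : Fin ℓ, A l (i (pos1 l)) (i (pos2 l))‖ with hFdef
  have hF0 : ∀ i, 0 ≤ F i := fun i => norm_nonneg _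
  have hsum : (∑ i : Fin (2 * ℓ) → Fin N, if P i then F i else 0)
      = ∑ i ∈ Finset.univ.filter P, F i := (Finset.sum_filter P F).symm
  rw [hsum]
  set T := Finset.univ.filter P with hTdef
  -- trivial case: no index tuples at all
  by_cases hNE : Nonempty (Fin (2 * ℓ) → Fin N)
  swap
  · haveI : IsEmpty (Fin (2 * ℓ) → Fin N) := not_nonempty_iff.mp hNE
    have : T = ∅ := Finset.eq_empty_of_isEmpty T
    rw [this, Finset.sum_empty]
    exact hRHS0
  obtain ⟨x₀⟩ := hNE
  -- key fiber bound
  have key : ∀ r : Fin (2 * ℓ) → Fin (2 * ℓ),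
      ∑ i ∈ T.filter (fun i => rep i = r), F i ≤ ∏ l : Fin ℓ, hsNorm (A l) := by
    intro r
    rcases (T.filter (fun i => rep i = r)).eq_empty_or_nonempty with he | ⟨i₀, hi₀⟩
    · rw [he, Finset.sum_empty]; exact hhs0
    obtain ⟨hi₀T, hi₀r⟩ := Finset.mem_filter.mp hi₀
    have hi₀P : P i₀ := (Finset.mem_filter.mp hi₀T).2
    -- structure of r
    set R : Finset (Fin (2 * ℓ)) := Finset.univ.image r with hRdef
    set S : Fin ℓ → Finset (Fin (2 * ℓ)) :=
      fun l => {r (pos1 l), r (pos2 l)} with hSdef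
    set f : Fin ℓ → (Fin (2 * ℓ) → Fin N) → ℝ :=
      fun l x => ‖A l (x (r (pos1 l))) (x (r (pos2 l)))‖ with hfdef
    have hrR : ∀ p, r p ∈ R := fun p => Finset.mem_image_of_mem r (Finset.mem_univ p)
    have hSR : ∀ l, S l ⊆ R := by
      intro l x hx
      rcases Finset.mem_insert.mp hx with h | h
      · exact h ▸ hrR _
      · exact (Finset.mem_singleton.mp h) ▸ hrR _
    -- degree bound
    have hdeg : ∀ v ∈ R, 2 ≤ ((Finset.univ : Finset (Fin ℓ)).filter
        fun l => v ∈ S l).card := by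
      intro v hvR
      obtain ⟨p₀, _, hp₀⟩ := Finset.mem_image.mp hvR
      set B : Finset (Fin (2 * ℓ)) := Finset.univ.filter fun q => i₀ q = i₀ p₀ with hBdef
      have hp₀B : p₀ ∈ B := Finset.mem_filter.mpr ⟨Finset.mem_univ _, rfl⟩
      have hBcard : 2 ≤ B.card := by
        have h1 : B.card ≠ 1 := hi₀P.1 p₀
        have h2 : 0 < B.card := Finset.card_pos.mpr ⟨p₀, hp₀B⟩
        omega
      have hrB : ∀ q ∈ B, r q = v := by
        intro q hq
        have : i₀ q = i₀ p₀ := (Finset.mem_filter.mp hq).2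
        rw [← hi₀r, ← hp₀]
        rw [← hi₀r] at *
        exact rep_congr this
      have hlamEv : ∀ q ∈ B, lamIdx q ∈ (Finset.univ : Finset (Fin ℓ)).filter
          fun l => v ∈ S l := by
        intro q hq
        refine Finset.mem_filter.mpr ⟨Finset.mem_univ _, ?_⟩
        have hrq : r q = v := hrB q hq
        rcases lam_pos q with h | h
        · rw [hSdef]
          exact Finset.mem_insert.mpr (Or.inl (by rw [← h, hrq]))
        · rw [hSdef]
          refine Finset.mem_insert.mpr (Or.inr (Finset.mem_singleton.mpr ?_))
          rw [← h, hrq]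
      set Ev := (Finset.univ : Finset (Fin ℓ)).filter fun l => v ∈ S l with hEvdef
      by_contra hlt
      push_neg at hlt
      have hEvne : Ev.Nonempty := ⟨lamIdx p₀, hlamEv p₀ hp₀B⟩
      have hEvcard : Ev.card = 1 := by
        have := Finset.card_pos.mpr hEvne
        omega
      obtain ⟨l, hl⟩ := Finset.card_eq_one.mp hEvcard
      have hlam_eq : ∀ q ∈ B, lamIdx q = l := by
        intro q hq
        have := hlamEv q hq
        rw [hl] at this
        exact Finset.mem_singleton.mp this
      have hBsub : B ⊆ ({pos1 l, pos2 l} : Finset (Fin (2 * ℓ))) := by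
        intro q hq
        rcases lam_pos q with h | h
        · exact Finset.mem_insert.mpr (Or.inl (by rw [h, hlam_eq q hq]))
        · exact Finset.mem_insert.mpr (Or.inr (Finset.mem_singleton.mpr
            (by rw [h, hlam_eq q hq])))
      have hcard2 : ({pos1 l, pos2 l} : Finset (Fin (2 * ℓ))).card ≤ 2 :=
        Finset.card_insert_le _ _ |>.trans (by simp)
      have hBeq : B = ({pos1 l, pos2 l} : Finset (Fin (2 * ℓ))) :=
        Finset.eq_of_subset_of_card_le hBsub (le_trans hcard2 hBcard)
      have hpos1B : pos1 l ∈ B := hBeq ▸ Finset.mem_insert_self _ _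
      have hval : i₀ (pos1 l) = i₀ p₀ := (Finset.mem_filter.mp hpos1B).2
      have : (Finset.univ.filter fun q => i₀ q = i₀ (pos1 l)) = B := by
        rw [hBdef]; ext q; simp [hval]
      exact hi₀P.2 l (this.trans hBeq)
    -- transfer fiber sum into fixSet sum
    have hfiber : ∑ i ∈ T.filter (fun i => rep i = r), F i
        ≤ ∑ x ∈ fixSet x₀ R, ∏ l : Fin ℓ, f l x := by
      set φ : (Fin (2 * ℓ) → Fin N) → (Fin (2 * ℓ) → Fin N) :=
        fun i a => if a ∈ R then i a else x₀ a with hφdef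
      have hmem : ∀ i ∈ T.filter (fun i => rep i = r), φ i ∈ fixSet x₀ R := by
        intro i _
        rw [mem_fixSet]
        intro a ha
        simp only [hφdef, if_neg ha]
      have hir : ∀ i ∈ T.filter (fun i => rep i = r), ∀ p, i (r p) = i p := by
        intro i hi p
        have := (Finset.mem_filter.mp hi).2
        rw [← this]
        exact rep_spec i p
      have hinj : ∀ i ∈ T.filter (fun i => rep i = r),
          ∀ j ∈ T.filter (fun i => rep i = r), φ i = φ j → i = j := by
        intro i hi j hj hij
        funext p
        have h1 : i (r p) = j (r p) := by
          have := congrFun hij (r p)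
          simpa only [hφdef, if_pos (hrR p)] using this
        rw [← hir i hi p, ← hir j hj p, h1]
      have hval : ∀ i ∈ T.filter (fun i => rep i = r),
          F i = ∏ l : Fin ℓ, f l (φ i) := by
        intro i hi
        rw [hFdef]
        simp only
        rw [norm_prod]
        refine Finset.prod_congr rfl fun l _ => ?_
        simp only [hfdef, hφdef, if_pos (hrR (pos1 l)), if_pos (hrR (pos2 l))]
        rw [hir i hi (pos1 l), hir i hi (pos2 l)]
      calc ∑ i ∈ T.filter (fun i => rep i = r), F i
          = ∑ i ∈ T.filter (fun i => rep i = r), ∏ l : Fin ℓ, f l (φ i) :=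
            Finset.sum_congr rfl hval
        _ = ∑ y ∈ (T.filter (fun i => rep i = r)).image φ, ∏ l : Fin ℓ, f l y :=
            (Finset.sum_image (f := fun y => ∏ l : Fin ℓ, f l y) hinj).symm
        _ ≤ ∑ x ∈ fixSet x₀ R, ∏ l : Fin ℓ, f l x := by
            refine Finset.sum_le_sum_of_subset_of_nonneg ?_ ?_
            · intro y hy
              obtain ⟨i, hi, rfl⟩ := Finset.mem_image.mp hy
              exact hmem i hi
            · intro x _ _
              exact Finset.prod_nonneg fun l _ => norm_nonneg _
    -- apply Finner
    have hfin := finner_ineq x₀ R Finset.univ S f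
      (fun l _ x => norm_nonneg _)
      (by
        intro l _ x y hxy
        simp only [hfdef]
        rw [hxy (r (pos1 l)) (Finset.mem_insert_self _ _),
          hxy (r (pos2 l)) (Finset.mem_insert.mpr (Or.inr (Finset.mem_singleton.mpr rfl)))])
      (fun l _ => hSR l)
      hdeg
    -- bound each HS-type norm
    have hnorm : ∀ l : Fin ℓ,
        Real.sqrt (∑ x ∈ fixSet x₀ (S l), f l x ^ 2) ≤ hsNorm (A l) := by
      intro l
      set u := r (pos1 l) with hudef
      set w := r (pos2 l) with hwdef
      set ψ : (Fin (2 * ℓ) → Fin N) → Fin N × Fin N := fun x => (x u, x w) with hψdef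
      have hinj : ∀ x ∈ fixSet x₀ (S l), ∀ y ∈ fixSet x₀ (S l), ψ x = ψ y → x = y := by
        intro x hx y hy hxy
        rw [mem_fixSet] at hx hy
        funext a
        by_cases hau : a = u
        · subst hau; exact congrArg Prod.fst hxy
        · by_cases haw : a = w
          · subst haw; exact congrArg Prod.snd hxy
          · have haS : a ∉ S l := by
              simp only [hSdef, Finset.mem_insert, Finset.mem_singleton]
              push_neg
              exact ⟨hau, haw⟩
            rw [hx a haS, hy a haS]
      have hb : ∑ x ∈ fixSet x₀ (S l), f l x ^ 2
          ≤ ∑ p : Fin N × Fin N, ‖A l p.1 p.2‖ ^ 2 := by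
        calc ∑ x ∈ fixSet x₀ (S l), f l x ^ 2
            = ∑ x ∈ fixSet x₀ (S l), ‖A l (ψ x).1 (ψ x).2‖ ^ 2 := rfl
          _ = ∑ p ∈ (fixSet x₀ (S l)).image ψ, ‖A l p.1 p.2‖ ^ 2 :=
              (Finset.sum_image (f := fun p : Fin N × Fin N => ‖A l p.1 p.2‖ ^ 2) hinj).symm
          _ ≤ ∑ p : Fin N × Fin N, ‖A l p.1 p.2‖ ^ 2 := by
              refine Finset.sum_le_sum_of_subset_of_nonneg
                (Finset.subset_univ _) ?_
              intro p _ _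
              exact sq_nonneg _
      have : hsNorm (A l) = Real.sqrt (∑ p : Fin N × Fin N, ‖A l p.1 p.2‖ ^ 2) := by
        rw [hsNorm]
        congr 1
        exact (Fintype.sum_prod_type (f := fun p : Fin N × Fin N => ‖A l p.1 p.2‖ ^ 2)).symm
      rw [this]
      exact Real.sqrt_le_sqrt hb
    calc ∑ i ∈ T.filter (fun i => rep i = r), F i
        ≤ ∑ x ∈ fixSet x₀ R, ∏ l : Fin ℓ, f l x := hfiber
      _ ≤ ∏ l : Fin ℓ, Real.sqrt (∑ x ∈ fixSet x₀ (S l), f l x ^ 2) := hfin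
      _ ≤ ∏ l : Fin ℓ, hsNorm (A l) := by
          refine Finset.prod_le_prod (fun l _ => Real.sqrt_nonneg _) (fun l _ => hnorm l)
  -- assemble
  have hfib : ∑ i ∈ T, F i
      = ∑ r : Fin (2 * ℓ) → Fin (2 * ℓ), ∑ i ∈ T.filter (fun i => rep i = r), F i :=
    (Finset.sum_fiberwise T (fun i => rep i) F).symm
  rw [hfib]
  have hbound : ∑ r : Fin (2 * ℓ) → Fin (2 * ℓ), ∑ i ∈ T.filter (fun i => rep i = r), F i
      ≤ (Finset.univ : Finset (Fin (2 * ℓ) → Fin (2 * ℓ))).card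
          • ∏ l : Fin ℓ, hsNorm (A l) :=
    Finset.sum_le_card_nsmul _ _ _ (fun r _ => key r)
  refine le_trans hbound ?_
  have hcard : (Finset.univ : Finset (Fin (2 * ℓ) → Fin (2 * ℓ))).card
      = (2 * ℓ) ^ (2 * ℓ) := by
    rw [Finset.card_univ, Fintype.card_fun, Fintype.card_fin]
  rw [hcard, nsmul_eq_mul]
  refine mul_le_mul_of_nonneg_right ?_ hhs0
  rw [← pow_mul]
  push_cast
  norm_num
end
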